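/- arXiv:1502.05107 — 2 statements merged into one kernel-verified Lean document; each statement's English description precedes it below -/
import Mathlib

section
/- Let f be a multivariate real polynomial in n variables with total degree d > 0. If f is bounded from below on the integer lattice, i.e. there exists B ∈ ℝ with f(x) ≥ B for all x ∈ ℤ^n, then the leading form f_d is positive semidefinite: f_d(x) ≥ 0 for all x ∈ ℝ^n. -/
/-!
Along the ray `k ↦ k • a` through a lattice point `a`, `f` restricts to a one-variable polynomial
of degree at most `d` whose `k ^ d`-coefficient is `f_d(a)`; since `k • a` is again a lattice point,
this polynomial is bounded below on `ℕ`, which forces `f_d(a) ≥ 0`. By homogeneity,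
`f_d(N • q) = N ^ d * f_d(q)`, so clearing denominators gives `f_d ≥ 0` on `ℚⁿ`, and then on `ℝⁿ`
by density and continuity.
-/

open MvPolynomial

theorem Polynomial.coeff_nonneg_of_bddBelow_eval_natCast {p : Polynomial ℝ} {d : ℕ}
    (hp : p.natDegree ≤ d) (hd : 0 < d) (hB : BddBelow (Set.range fun k : ℕ => p.eval (k : ℝ))) :
    0 ≤ p.coeff d := by
  by_contra! hneg
  have hdeg : p.natDegree = d := natDegree_eq_of_le_of_coeff_ne_zero hp hneg.ne
  have hlead : p.leadingCoeff ≤ 0 := by rw [leadingCoeff, hdeg]; exact hneg.le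
  have hdegpos : 0 < p.degree := natDegree_pos_iff_degree_pos.mp (hdeg ▸ hd)
  exact Filter.not_bddBelow_of_tendsto_atBot
    ((p.tendsto_atBot_of_leadingCoeff_nonpos hdegpos hlead).comp tendsto_natCast_atTop_atTop) hB

theorem exists_nat_mul_eq_intCast {ι : Type*} [Finite ι] (q : ι → ℚ) :
    ∃ N : ℕ, 0 < N ∧ ∃ a : ι → ℤ, ∀ i, (N : ℚ) * q i = a i := by
  have := Fintype.ofFinite ι
  refine ⟨∏ i, (q i).den, Finset.prod_pos fun i _ => (q i).pos, ?_⟩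
  choose k hk using fun i => Finset.dvd_prod_of_mem (fun j => (q j).den) (Finset.mem_univ i)
  refine ⟨fun i => k i * (q i).num, fun i => ?_⟩
  rw [hk i, Int.cast_mul, ← Rat.mul_den_eq_num]
  push_cast
  ring

namespace MvPolynomial

theorem IsHomogeneous.eval_smul {σ R : Type*} [CommSemiring R] {φ : MvPolynomial σ R} {m : ℕ}
    (hφ : φ.IsHomogeneous m) (c : R) (x : σ → R) :
    eval (c • x) φ = c ^ m * eval x φ := by
  rw [eval_eq, eval_eq, Finset.mul_sum]
  refine Finset.sum_congr rfl fun D hD => ?_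
  have hD : ∑ i ∈ D.support, D i = m :=
    by_contra fun h => mem_support_iff.mp hD (hφ.coeff_eq_zero h)
  simp only [Pi.smul_apply, smul_eq_mul, mul_pow, Finset.prod_mul_distrib,
    Finset.prod_pow_eq_pow_sum, hD]
  ring

theorem eval_smul_eq_sum_homogeneousComponent {σ R : Type*} [CommSemiring R]
    (f : MvPolynomial σ R) (c : R) (x : σ → R) :
    eval (c • x) f =
      ∑ j ∈ Finset.range (f.totalDegree + 1), c ^ j * eval x (homogeneousComponent j f) := by
  conv_lhs => rw [← sum_homogeneousComponent f]
  rw [map_sum]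
  exact Finset.sum_congr rfl fun j _ => (homogeneousComponent_isHomogeneous j f).eval_smul c x

theorem eval_homogeneousComponent_totalDegree_nonneg_of_bddBelow {σ : Type*}
    {f : MvPolynomial σ ℝ} (hf : 0 < f.totalDegree) (x : σ → ℝ)
    (hB : BddBelow (Set.range fun k : ℕ => eval ((k : ℝ) • x) f)) :
    0 ≤ eval x (homogeneousComponent f.totalDegree f) := by
  set p : Polynomial ℝ := ∑ j ∈ Finset.range (f.totalDegree + 1),
    Polynomial.C (eval x (homogeneousComponent j f)) * Polynomial.X ^ j
  have hp_eval : ∀ t : ℝ, p.eval t = eval (t • x) f := fun t => by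
    simp only [p, Polynomial.eval_finsetSum, Polynomial.eval_mul, Polynomial.eval_C,
      Polynomial.eval_pow, Polynomial.eval_X, eval_smul_eq_sum_homogeneousComponent, mul_comm]
  have hp_deg : p.natDegree ≤ f.totalDegree :=
    Polynomial.natDegree_sum_le_of_forall_le _ _ fun j hj =>
      Polynomial.natDegree_C_mul_X_pow_le _ j |>.trans (Nat.lt_succ_iff.mp (Finset.mem_range.mp hj))
  have hp_coeff : p.coeff f.totalDegree = eval x (homogeneousComponent f.totalDegree f) := by
    simp [p]
  rw [← hp_coeff]
  exact Polynomial.coeff_nonneg_of_bddBelow_eval_natCast hp_deg hf (by simpa only [hp_eval] using hB)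

theorem IsHomogeneous.nonneg_of_forall_intCast_nonneg {σ : Type*} [Finite σ]
    {φ : MvPolynomial σ ℝ} {m : ℕ} (hφ : φ.IsHomogeneous m)
    (h : ∀ a : σ → ℤ, 0 ≤ eval (fun i => (a i : ℝ)) φ) (x : σ → ℝ) : 0 ≤ eval x φ := by
  have hdense : DenseRange (Pi.map fun (_ : σ) (q : ℚ) => (q : ℝ)) :=
    DenseRange.piMap fun _ => Rat.denseRange_cast
  refine hdense.induction_on x (isClosed_le continuous_const (continuous_eval φ)) fun q => ?_
  obtain ⟨N, hN, a, ha⟩ := exists_nat_mul_eq_intCast q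
  have hscale : (N : ℝ) • Pi.map (fun _ (q : ℚ) => (q : ℝ)) q = fun i => (a i : ℝ) := by
    ext i; simpa using congrArg (Rat.cast : ℚ → ℝ) (ha i)
  have ha_nonneg := h a
  rw [← hscale, hφ.eval_smul] at ha_nonneg
  exact nonneg_of_mul_nonneg_right ha_nonneg (by positivity)

end MvPolynomial

theorem leading_form_psd_of_bddBelow_on_lattice
    {n : ℕ} (f : MvPolynomial (Fin n) ℝ) (d : ℕ)
    (hd : d = f.totalDegree) (hd0 : 0 < d)
    (B : ℝ) (hB : ∀ x : Fin n → ℤ, B ≤ eval (fun i => (x i : ℝ)) f) :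
    ∀ x : Fin n → ℝ, 0 ≤ eval x (homogeneousComponent d f) := by
  subst hd
  refine (homogeneousComponent_isHomogeneous _ f).nonneg_of_forall_intCast_nonneg fun a => ?_
  refine eval_homogeneousComponent_totalDegree_nonneg_of_bddBelow hd0 _ ⟨B, ?_⟩
  rintro _ ⟨k, rfl⟩
  convert hB (k • a) using 3
  ext i
  simp
end

section
/- Let f be a multivariate real polynomial in n variables with deg f > 0, let h ∈ ℝ^n, and let g ∈ cone(h) be such that f − g is a sum of squares. Then deg g ≤ deg f. -/
/-!
Restrict everything to the diagonal `x = (t, …, t)`. A generator `∏ i, (X i - h i) ^ (2 α i)` of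
`cone(h)` becomes a monic univariate polynomial of degree `2 ∑ α i` and is nonnegative, so
keeping only the constant term and a generator `β` of maximal degree (whose coefficient `b` is
positive as soon as `deg g > 0`) gives `c + b ∏ i, (t - h i) ^ (2 β i) ≤ g(t, …, t) ≤ f(t, …, t)`
for all real `t`. A univariate polynomial with positive leading coefficient that stays below
another one cannot have larger degree, so `deg g ≤ 2 ∑ β i ≤ deg f`.
-/

open MvPolynomial Finset

/-- `g ∈ cone(h)`: a conic combination of monomials with even exponents
shifted by `h` (the constant coefficient `b 0` may be arbitrary). -/
def MemCone {n : ℕ} (h : Fin n → ℝ) (g : MvPolynomial (Fin n) ℝ) : Prop :=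
  ∃ (J : Finset (Fin n → ℕ)) (b : (Fin n → ℕ) → ℝ),
    (∀ α ∈ J, α ≠ 0 → 0 ≤ b α) ∧
    g = ∑ α ∈ J, MvPolynomial.C (b α) *
      ∏ i, (MvPolynomial.X i - MvPolynomial.C (h i)) ^ (2 * α i)

/-- A polynomial is a sum of squares. -/
def IsSos {n : ℕ} (p : MvPolynomial (Fin n) ℝ) : Prop :=
  ∃ (k : ℕ) (u : Fin k → MvPolynomial (Fin n) ℝ), p = ∑ i, (u i) ^ 2

theorem Polynomial.natDegree_le_of_forall_eval_le {𝕜 : Type*} [NormedField 𝕜] [LinearOrder 𝕜]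
    [IsStrictOrderedRing 𝕜] [OrderTopology 𝕜] {P Q : Polynomial 𝕜} (hP : 0 < P.leadingCoeff)
    (hle : ∀ x, P.eval x ≤ Q.eval x) : P.natDegree ≤ Q.natDegree := by
  by_contra! hlt
  have hdeg : (P - Q).natDegree = P.natDegree := natDegree_sub_eq_left_of_natDegree_lt hlt
  have hlead : (P - Q).leadingCoeff = P.leadingCoeff :=
    leadingCoeff_sub_of_degree_lt (degree_lt_degree hlt)
  have htop := tendsto_atTop_of_leadingCoeff_nonneg (P - Q)
    (natDegree_pos_iff_degree_pos.mp (hdeg ▸ (Nat.zero_le _).trans_lt hlt)) (hlead ▸ hP.le)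
  obtain ⟨x, hx⟩ := (htop.eventually_gt_atTop 0).exists
  rw [eval_sub] at hx
  linarith [hle x]

namespace MvPolynomial

noncomputable def restrictDiagonal (σ R : Type*) [CommSemiring R] :
    MvPolynomial σ R →ₐ[R] Polynomial R :=
  aeval fun _ => Polynomial.X

variable {σ R : Type*} [CommSemiring R]

theorem eval_restrictDiagonal (p : MvPolynomial σ R) (t : R) :
    (restrictDiagonal σ R p).eval t = eval (fun _ => t) p := by
  rw [← Polynomial.coe_aeval_eq_eval, restrictDiagonal, ← AlgHom.comp_apply, comp_aeval,
    Polynomial.aeval_X]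
  rfl

theorem natDegree_restrictDiagonal_le (p : MvPolynomial σ R) :
    (restrictDiagonal σ R p).natDegree ≤ p.totalDegree := by
  conv_lhs => rw [p.as_sum, map_sum]
  refine Polynomial.natDegree_sum_le_of_forall_le _ _ fun m hm => ?_
  rw [restrictDiagonal, aeval_monomial, Finsupp.prod, prod_pow_eq_pow_sum,
    Polynomial.algebraMap_eq]
  exact (Polynomial.natDegree_C_mul_X_pow_le _ _).trans (le_totalDegree hm)

end MvPolynomial

section Cone

variable {n : ℕ}

/-- The generators of `cone(h)`. -/
noncomputable def evenShiftedMonomial (h : Fin n → ℝ) (α : Fin n → ℕ) :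
    MvPolynomial (Fin n) ℝ :=
  ∏ i, (X i - C (h i)) ^ (2 * α i)

theorem totalDegree_evenShiftedMonomial_le (h : Fin n → ℝ) (α : Fin n → ℕ) :
    (evenShiftedMonomial h α).totalDegree ≤ ∑ i, 2 * α i := by
  refine (totalDegree_finsetProd _ _).trans (sum_le_sum fun i _ => (totalDegree_pow _ _).trans ?_)
  have hX : (X i - C (h i) : MvPolynomial (Fin n) ℝ).totalDegree ≤ 1 :=
    (totalDegree_sub_C_le _ _).trans (totalDegree_X i).le
  simpa using Nat.mul_le_mul_left (2 * α i) hX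

theorem eval_evenShiftedMonomial_nonneg (h : Fin n → ℝ) (α : Fin n → ℕ) (x : Fin n → ℝ) :
    0 ≤ eval x (evenShiftedMonomial h α) := by
  simp only [evenShiftedMonomial, map_prod, map_pow, map_sub, eval_X, eval_C, pow_mul]
  exact prod_nonneg fun i _ => pow_nonneg (sq_nonneg _) _

theorem restrictDiagonal_evenShiftedMonomial (h : Fin n → ℝ) (α : Fin n → ℕ) :
    restrictDiagonal (Fin n) ℝ (evenShiftedMonomial h α) =
      ∏ i, (Polynomial.X - Polynomial.C (h i)) ^ (2 * α i) := by
  simp [restrictDiagonal, evenShiftedMonomial]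

theorem monic_restrictDiagonal_evenShiftedMonomial (h : Fin n → ℝ) (α : Fin n → ℕ) :
    (restrictDiagonal (Fin n) ℝ (evenShiftedMonomial h α)).Monic := by
  rw [restrictDiagonal_evenShiftedMonomial]
  exact Polynomial.monic_prod_of_monic _ _ fun i _ => (Polynomial.monic_X_sub_C _).pow _

theorem natDegree_restrictDiagonal_evenShiftedMonomial (h : Fin n → ℝ) (α : Fin n → ℕ) :
    (restrictDiagonal (Fin n) ℝ (evenShiftedMonomial h α)).natDegree = ∑ i, 2 * α i := by
  rw [restrictDiagonal_evenShiftedMonomial, Polynomial.natDegree_prod_of_monic _ _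
    fun i _ => (Polynomial.monic_X_sub_C _).pow _]
  simp

theorem MemCone.exists_pos_coeff {h : Fin n → ℝ} {g : MvPolynomial (Fin n) ℝ}
    (hg : MemCone h g) :
    ∃ (J : Finset (Fin n → ℕ)) (b : (Fin n → ℕ) → ℝ), (∀ α ∈ J, α ≠ 0 → 0 < b α) ∧
      g = ∑ α ∈ J, C (b α) * evenShiftedMonomial h α := by
  obtain ⟨J, b, hb, rfl⟩ := hg
  refine ⟨J.filter (b · ≠ 0), b, fun α hα hα0 => ?_, (sum_filter_of_ne fun α _ hne => ?_).symm⟩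
  · obtain ⟨hαJ, hbα⟩ := mem_filter.mp hα
    exact (hb α hαJ hα0).lt_of_ne' hbα
  · rintro hbα
    simp [hbα] at hne

theorem totalDegree_sum_C_mul_evenShiftedMonomial_le {J : Finset (Fin n → ℕ)}
    {b : (Fin n → ℕ) → ℝ} {h : Fin n → ℝ} {β : Fin n → ℕ}
    (hβ : ∀ α ∈ J, ∑ i, 2 * α i ≤ ∑ i, 2 * β i) :
    (∑ α ∈ J, C (b α) * evenShiftedMonomial h α).totalDegree ≤ ∑ i, 2 * β i := by
  refine totalDegree_finsetSum_le fun α hα => (totalDegree_mul _ _).trans ?_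
  rw [totalDegree_C, zero_add]
  exact (totalDegree_evenShiftedMonomial_le h α).trans (hβ α hα)

/-- `c` is the constant coefficient; the terms dropped besides it are nonnegative. -/
theorem exists_add_le_eval_sum_C_mul_evenShiftedMonomial {J : Finset (Fin n → ℕ)}
    {b : (Fin n → ℕ) → ℝ} (hb : ∀ α ∈ J, α ≠ 0 → 0 ≤ b α) (h : Fin n → ℝ) {β : Fin n → ℕ}
    (hβJ : β ∈ J) (hβ0 : β ≠ 0) :
    ∃ c : ℝ, ∀ x, c + b β * eval x (evenShiftedMonomial h β) ≤
      eval x (∑ α ∈ J, C (b α) * evenShiftedMonomial h α) := by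
  refine ⟨∑ α ∈ J with α = 0, b α, fun x => ?_⟩
  simp only [map_sum, map_mul, eval_C]
  rw [← sum_filter_add_sum_filter_not J (· = 0)]
  refine add_le_add (sum_le_sum fun α hα => ?_) (single_le_sum
    (f := fun α => b α * eval x (evenShiftedMonomial h α)) (fun α hα => ?_) ?_)
  · rw [(mem_filter.mp hα).2]
    simp [evenShiftedMonomial]
  · obtain ⟨hαJ, hα0⟩ := mem_filter.mp hα
    exact mul_nonneg (hb α hαJ hα0) (eval_evenShiftedMonomial_nonneg h α x)
  · exact mem_filter.mpr ⟨hβJ, hβ0⟩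

theorem MemCone.exists_le_eval {h : Fin n → ℝ} {g : MvPolynomial (Fin n) ℝ} (hg : MemCone h g)
    (hpos : 0 < g.totalDegree) :
    ∃ (β : Fin n → ℕ) (b c : ℝ), 0 < b ∧ g.totalDegree ≤ ∑ i, 2 * β i ∧
      ∀ x, c + b * eval x (evenShiftedMonomial h β) ≤ eval x g := by
  obtain ⟨J, b, hb, rfl⟩ := hg.exists_pos_coeff
  have hJ : J.Nonempty := nonempty_iff_ne_empty.mpr fun hJ => by simp [hJ] at hpos
  obtain ⟨β, hβJ, hβmax⟩ := J.exists_max_image (fun α => ∑ i, 2 * α i) hJ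
  have hdeg := totalDegree_sum_C_mul_evenShiftedMonomial_le (b := b) (h := h) hβmax
  have hβ0 : β ≠ 0 := by
    rintro rfl
    simp only [Pi.zero_apply, mul_zero, sum_const_zero] at hdeg
    omega
  obtain ⟨c, hc⟩ := exists_add_le_eval_sum_C_mul_evenShiftedMonomial
    (fun α hα hα0 => (hb α hα hα0).le) h hβJ hβ0
  exact ⟨β, b β, c, hb β hβJ hβ0, hdeg, hc⟩

end Cone

theorem IsSos.eval_nonneg {n : ℕ} {p : MvPolynomial (Fin n) ℝ} (hp : IsSos p) (x : Fin n → ℝ) :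
    0 ≤ eval x p := by
  obtain ⟨k, u, rfl⟩ := hp
  simpa only [map_sum, map_pow] using sum_nonneg fun i _ => sq_nonneg (eval x (u i))

theorem degree_bound_for_global_underestimators_general
    {n : ℕ} (f g : MvPolynomial (Fin n) ℝ) (h : Fin n → ℝ)
    (hgc : MemCone h g)
    (hsos : IsSos (f - g)) :
    g.totalDegree ≤ f.totalDegree := by
  rcases Nat.eq_zero_or_pos g.totalDegree with hg0 | hpos
  · exact hg0 ▸ Nat.zero_le _
  obtain ⟨β, b, c, hb, hdeg, hle⟩ := hgc.exists_le_eval hpos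
  set P := restrictDiagonal (Fin n) ℝ (evenShiftedMonomial h β)
  have hmonic : P.Monic := monic_restrictDiagonal_evenShiftedMonomial h β
  have hPf : ∀ t, (Polynomial.C b * P).eval t ≤
      (restrictDiagonal (Fin n) ℝ f - Polynomial.C c).eval t := by
    intro t
    have hfg := hsos.eval_nonneg fun _ => t
    rw [map_sub] at hfg
    simp only [P, Polynomial.eval_mul, Polynomial.eval_sub, Polynomial.eval_C,
      eval_restrictDiagonal]
    linarith [hle fun _ => t]
  calc g.totalDegree ≤ ∑ i, 2 * β i := hdeg
    _ = (Polynomial.C b * P).natDegree := by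
      rw [Polynomial.natDegree_C_mul hb.ne', natDegree_restrictDiagonal_evenShiftedMonomial]
    _ ≤ (restrictDiagonal (Fin n) ℝ f - Polynomial.C c).natDegree :=
      Polynomial.natDegree_le_of_forall_eval_le (by
        rwa [Polynomial.leadingCoeff_mul, Polynomial.leadingCoeff_C, hmonic.leadingCoeff,
          mul_one]) hPf
    _ = (restrictDiagonal (Fin n) ℝ f).natDegree := Polynomial.natDegree_sub_C
    _ ≤ f.totalDegree := natDegree_restrictDiagonal_le f

theorem degree_bound_for_global_underestimators
    {n : ℕ} (f g : MvPolynomial (Fin n) ℝ) (h : Fin n → ℝ)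
    (hf : 0 < f.totalDegree) (hgc : MemCone h g)
    (hsos : IsSos (f - g)) :
    g.totalDegree ≤ f.totalDegree :=
  degree_bound_for_global_underestimators_general f g h hgc hsos
end
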